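/- Let λ_0 < 0 < λ_1 < … < λ_{m−1} be real numbers (pairwise distinct and nonzero) and c_0, …, c_{m−1} positive real numbers. Let P(t) = ∏_{j=0}^{m−1} (t − λ_j) + 2 ∑_{j=0}^{m−1} λ_j c_j ∏_{k≠j} (t − λ_k). Then P has at most one real multiple root: there do not exist two distinct real numbers μ ≠ μ′ with P(μ) = P′(μ) = 0 and P(μ′) = P′(μ′) = 0. -/

import Mathlib

open Finset

/-! Away from the nodes `λ_j`, `P(t) = ∏ (t - λ_j) · F(t)` with `F(t) = 1 + 2 ∑ λ_j c_j / (t - λ_j)`,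
and no root of `P` is a node. So a multiple root `μ` of `P` is a multiple root of `F`, i.e. the
vector `y_j = 1 / (μ - λ_j)` satisfies `∑ λ_j c_j y_j = -1/2` and `∑ λ_j c_j y_j² = 0`. For two
multiple roots `μ ≠ μ'` the first identity forces `y` and `y'` to be orthogonal as well, so they
span an isotropic plane of the form `∑ λ_j c_j y_j z_j`, which is positive definite off the
coordinate `0`. Such a plane is at most a line, so `y` and `y'` are proportional, which the
coordinates `0` and `1` rule out. -/

section Secular

variable {ι : Type*} (s : Finset ι) (l w : ι → ℝ)

noncomputable def secularPoly [DecidableEq ι] (t : ℝ) : ℝ :=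
  (∏ j ∈ s, (t - l j)) + 2 * ∑ j ∈ s, w j * ∏ k ∈ s.erase j, (t - l k)

noncomputable def secularFun (t : ℝ) : ℝ :=
  1 + 2 * ∑ j ∈ s, w j * (t - l j)⁻¹

variable {s l w}

theorem secularPoly_eq_prod_mul_secularFun [DecidableEq ι] {t : ℝ} (ht : ∀ j ∈ s, t ≠ l j) :
    secularPoly s l w t = (∏ j ∈ s, (t - l j)) * secularFun s l w t := by
  have hterm : ∀ j ∈ s, w j * ∏ k ∈ s.erase j, (t - l k)
      = (∏ k ∈ s, (t - l k)) * (w j * (t - l j)⁻¹) := fun j hj => by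
    rw [← mul_prod_erase s _ hj]
    field_simp [sub_ne_zero.2 (ht j hj)]
  rw [secularPoly, secularFun, sum_congr rfl hterm, ← mul_sum]
  ring

theorem ne_of_secularPoly_eq_zero [DecidableEq ι] (hw : ∀ j ∈ s, w j ≠ 0) (hl : Set.InjOn l s) {t : ℝ}
    (ht : secularPoly s l w t = 0) : ∀ j ∈ s, t ≠ l j := by
  rintro j hj rfl
  have hprod : ∏ k ∈ s, (l j - l k) = 0 := prod_eq_zero hj (sub_self _)
  have hsum : ∑ i ∈ s, w i * ∏ k ∈ s.erase i, (l j - l k)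
      = w j * ∏ k ∈ s.erase j, (l j - l k) := by
    refine sum_eq_single_of_mem j hj fun i _ hij => ?_
    rw [prod_eq_zero (mem_erase.2 ⟨hij.symm, hj⟩) (sub_self _), mul_zero]
  have hne : w j * ∏ k ∈ s.erase j, (l j - l k) ≠ 0 := by
    refine mul_ne_zero (hw j hj) (prod_ne_zero_iff.2 fun k hk => sub_ne_zero.2 fun hjk => ?_)
    exact (mem_erase.1 hk).1 (hl (mem_erase.1 hk).2 hj hjk.symm)
  rw [secularPoly, hprod, hsum, zero_add] at ht
  exact hne (by linarith)

theorem hasDerivAt_secularFun {μ : ℝ} (hμ : ∀ j ∈ s, μ ≠ l j) :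
    HasDerivAt (secularFun s l w) (-2 * ∑ j ∈ s, w j * (μ - l j)⁻¹ * (μ - l j)⁻¹) μ := by
  have hterm : ∀ j ∈ s, HasDerivAt (fun t => w j * (t - l j)⁻¹)
      (-(w j * (μ - l j)⁻¹ * (μ - l j)⁻¹)) μ := fun j hj => by
    have := (((hasDerivAt_id' μ).sub_const (l j)).fun_inv (sub_ne_zero.2 (hμ j hj))).const_mul (w j)
    exact this.congr_deriv (by rw [div_eq_mul_inv, ← inv_pow]; ring)
  exact (((HasDerivAt.fun_sum hterm).const_mul 2).const_add 1).congr_deriv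
    (by rw [sum_neg_distrib]; ring)

theorem sum_mul_inv_and_sum_mul_inv_sq_of_multiple_root [DecidableEq ι] {μ : ℝ} (hμ : ∀ j ∈ s, μ ≠ l j)
    (hP : secularPoly s l w μ = 0) (hP' : deriv (secularPoly s l w) μ = 0) :
    ∑ j ∈ s, w j * (μ - l j)⁻¹ = -(1 / 2) ∧
      ∑ j ∈ s, w j * (μ - l j)⁻¹ * (μ - l j)⁻¹ = 0 := by
  set Q : ℝ → ℝ := fun t => ∏ j ∈ s, (t - l j)
  have hQ : Q μ ≠ 0 := prod_ne_zero_iff.2 fun j hj => sub_ne_zero.2 (hμ j hj)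
  have hF : secularFun s l w μ = 0 := by
    rw [secularPoly_eq_prod_mul_secularFun hμ] at hP
    exact (mul_eq_zero.1 hP).resolve_left hQ
  have hnodes : {t : ℝ | ∀ j ∈ s, t ≠ l j} ∈ nhds μ := by
    have : {t : ℝ | ∀ j ∈ s, t ≠ l j} = (↑(s.image l) : Set ℝ)ᶜ := by
      ext t
      simp [eq_comm]
    rw [this]
    exact (s.image l).finite_toSet.isClosed.isOpen_compl.mem_nhds (by simpa [eq_comm] using hμ)
  have hPQF : secularPoly s l w =ᶠ[nhds μ] fun t => Q t * secularFun s l w t :=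
    Filter.eventuallyEq_of_mem hnodes fun t ht => secularPoly_eq_prod_mul_secularFun ht
  have hQd : DifferentiableAt ℝ Q μ := by fun_prop
  have hF' := hasDerivAt_secularFun (w := w) hμ
  rw [hPQF.deriv_eq, deriv_fun_mul hQd hF'.differentiableAt, hF, mul_zero, zero_add,
    hF'.deriv] at hP'
  refine ⟨by rw [secularFun] at hF; linarith, ?_⟩
  rcases mul_eq_zero.1 hP' with h | h
  · exact absurd h hQ
  · linarith

end Secular

theorem sum_mul_inv_mul_inv_eq_zero {ι : Type*} {s : Finset ι} {l w : ι → ℝ} {a b : ℝ}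
    (hab : a ≠ b) (ha : ∀ j ∈ s, a ≠ l j) (hb : ∀ j ∈ s, b ≠ l j)
    (h : ∑ j ∈ s, w j * (a - l j)⁻¹ = ∑ j ∈ s, w j * (b - l j)⁻¹) :
    ∑ j ∈ s, w j * (a - l j)⁻¹ * (b - l j)⁻¹ = 0 := by
  have hdiff : ∀ j ∈ s, w j * (a - l j)⁻¹ - w j * (b - l j)⁻¹
      = (b - a) * (w j * (a - l j)⁻¹ * (b - l j)⁻¹) := fun j hj => by
    field_simp [sub_ne_zero.2 (ha j hj), sub_ne_zero.2 (hb j hj)]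
    ring
  have : (b - a) * ∑ j ∈ s, w j * (a - l j)⁻¹ * (b - l j)⁻¹ = 0 := by
    rw [mul_sum, ← sum_congr rfl hdiff, sum_sub_distrib, h, sub_self]
  exact (mul_eq_zero.1 this).resolve_left (sub_ne_zero.2 hab.symm)

theorem mul_eq_mul_of_isotropic_of_orthogonal {ι : Type*} {s : Finset ι} {w y z : ι → ℝ}
    {i : ι} (hw : ∀ j ∈ s, j ≠ i → 0 < w j)
    (hyy : ∑ j ∈ s, w j * y j * y j = 0) (hzz : ∑ j ∈ s, w j * z j * z j = 0)
    (hyz : ∑ j ∈ s, w j * y j * z j = 0) : ∀ j ∈ s, y i * z j = z i * y j := by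
  have hsum : ∑ j ∈ s, w j * (z i * y j - y i * z j) ^ 2 = 0 :=
    calc ∑ j ∈ s, w j * (z i * y j - y i * z j) ^ 2
        = z i ^ 2 * ∑ j ∈ s, w j * y j * y j - 2 * (z i * y i) * ∑ j ∈ s, w j * y j * z j
            + y i ^ 2 * ∑ j ∈ s, w j * z j * z j := by
          simp only [mul_sum, ← sum_sub_distrib, ← sum_add_distrib]
          exact sum_congr rfl fun j _ => by ring
      _ = 0 := by rw [hyy, hyz, hzz]; ring
  have hnonneg : ∀ j ∈ s, 0 ≤ w j * (z i * y j - y i * z j) ^ 2 := fun j hj => by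
    rcases eq_or_ne j i with rfl | hji
    · simp [mul_comm]
    · exact mul_nonneg (hw j hj hji).le (sq_nonneg _)
  intro j hj
  rcases eq_or_ne j i with rfl | hji
  · ring
  have hterm := (sum_eq_zero_iff_of_nonneg hnonneg).1 hsum j hj
  have := pow_eq_zero_iff two_ne_zero |>.1 <| (mul_eq_zero.1 hterm).resolve_left (hw j hj hji).ne'
  linarith

/-- For `λ_0 < 0 < λ_1 < … < λ_{m-1}` (pairwise distinct, nonzero) and positive
`c_j`, the polynomial `P(t) = ∏_j (t - λ_j) + 2 ∑_j λ_j c_j ∏_{k≠j} (t - λ_k)` has at most one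
real multiple root: there are no two distinct reals at which both `P` and `P′` vanish. -/
theorem at_most_one_multiple_root (m : ℕ) (hm : 2 ≤ m) (l : ℕ → ℝ)
    (hneg : l 0 < 0) (hpos : 0 < l 1) (hmono : ∀ i j, i < j → j < m → l i < l j)
    (c : ℕ → ℝ) (hc : ∀ j, j < m → 0 < c j) :
    let P : ℝ → ℝ := fun t =>
      (∏ j ∈ Finset.range m, (t - l j)) +
        2 * ∑ j ∈ Finset.range m, l j * c j * ∏ k ∈ (Finset.range m).erase j, (t - l k)
    ¬ ∃ μ μ' : ℝ, μ ≠ μ' ∧ P μ = 0 ∧ deriv P μ = 0 ∧ P μ' = 0 ∧ deriv P μ' = 0 := by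
  rintro P ⟨μ, μ', hne, hPμ, hP'μ, hPμ', hP'μ'⟩
  have hlpos : ∀ j ∈ range m, j ≠ 0 → 0 < l j := fun j hj hj0 =>
    (eq_or_ne j 1).elim (fun h => h ▸ hpos)
      fun h1 => hpos.trans (hmono 1 j (by omega) (mem_range.1 hj))
  have hw : ∀ j ∈ range m, l j * c j ≠ 0 := fun j hj => mul_ne_zero
    ((eq_or_ne j 0).elim (fun h => h ▸ hneg.ne) fun h => (hlpos j hj h).ne')
    (hc j (mem_range.1 hj)).ne'
  have hinj : Set.InjOn l (range m) :=
    StrictMonoOn.injOn fun i _ j hj hij => hmono i j hij (mem_range.1 (mem_coe.1 hj))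
  have hμ := ne_of_secularPoly_eq_zero hw hinj hPμ
  have hμ' := ne_of_secularPoly_eq_zero hw hinj hPμ'
  obtain ⟨hμ₁, hμ₂⟩ := sum_mul_inv_and_sum_mul_inv_sq_of_multiple_root hμ hPμ hP'μ
  obtain ⟨hμ'₁, hμ'₂⟩ := sum_mul_inv_and_sum_mul_inv_sq_of_multiple_root hμ' hPμ' hP'μ'
  have hcross := sum_mul_inv_mul_inv_eq_zero hne hμ hμ' (hμ₁.trans hμ'₁.symm)
  have hpar := mul_eq_mul_of_isotropic_of_orthogonal
    (fun j hj hj0 => mul_pos (hlpos j hj hj0) (hc j (mem_range.1 hj))) hμ₂ hμ'₂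
    (by simpa only [mul_assoc] using hcross) 1 (mem_range.2 (by omega))
  have h0 : (0 : ℕ) ∈ range m := mem_range.2 (by omega)
  have h1 : (1 : ℕ) ∈ range m := mem_range.2 (by omega)
  field_simp [sub_ne_zero.2 (hμ 0 h0), sub_ne_zero.2 (hμ 1 h1), sub_ne_zero.2 (hμ' 0 h0),
    sub_ne_zero.2 (hμ' 1 h1)] at hpar
  have : (μ - μ') * (l 1 - l 0) = 0 := by linear_combination hpar
  rcases mul_eq_zero.1 this with h | h
  · exact hne (sub_eq_zero.1 h)
  · linarith [hmono 0 1 one_pos (by omega)]
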